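/- Let T be the tree obtained from the star K_{1,3} by subdividing each of its three edges exactly t times (so T has n = 3t + 4 vertices). Then pe(T) = (n-1)/3 = t + 1. -/

import Mathlib

open SimpleGraph

variable {V : Type*} [Fintype V] [DecidableEq V]

/-- Distance from a vertex `u` to the vertex set of a walk `P`. -/
noncomputable def walkDist (G : SimpleGraph V) {a b : V} (P : G.Walk a b) (u : V) : ℕ :=
  P.support.toFinset.inf' ⟨a, List.mem_toFinset.mpr P.start_mem_support⟩ (fun x => G.dist u x)

/-- Eccentricity of a walk: max distance from any vertex of `G` to the walk. -/
noncomputable def eccW (G : SimpleGraph V) {a b : V} (P : G.Walk a b) : ℕ :=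
  Finset.univ.sup (walkDist G P)

/-- Path eccentricity of a graph. -/
noncomputable def pe (G : SimpleGraph V) : ℕ :=
  sInf {m | ∃ (a b : V) (P : G.Walk a b), P.IsPath ∧ eccW G P = m}

/-- `P` is a longest path in `G`. -/
def IsLongestPath (G : SimpleGraph V) {a b : V} (P : G.Walk a b) : Prop :=
  P.IsPath ∧ ∀ (c d : V) (Q : G.Walk c d), Q.IsPath → Q.length ≤ P.length

/-- `G` is `k`-connected. -/
def KConnected (k : ℕ) (G : SimpleGraph V) : Prop :=
  k + 1 ≤ Fintype.card V ∧
    ∀ S : Finset V, S.card < k → (G.induce ((↑S : Set V)ᶜ)).Connected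

/-- Adjacency relation of the spider obtained from `K_{1,3}` by subdividing each
edge `t` times: the center is `none`; leg `i` consists of vertices
`some (i, 0), …, some (i, t)` forming a path starting at the center. -/
def spiderRel (t : ℕ) : Option (Fin 3 × Fin (t + 1)) → Option (Fin 3 × Fin (t + 1)) → Prop
  | none, some p => p.2.val = 0
  | some p, some q => p.1 = q.1 ∧ q.2.val = p.2.val + 1
  | _, _ => False

/-!
Every vertex lies within `t + 1` of the centre, so the one-vertex path at the centre has
eccentricity at most `t + 1`. Conversely, the centre is a cut vertex whose removal leaves the
three legs, so a path meets at most two legs besides the centre. The tip of a missed leg is then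
at distance at least `t + 1` from the path: its depth along that leg drops by at most one per
edge, from `t + 1` at the tip to `0` off the leg.
-/

section Eccentricity

variable {G : SimpleGraph V} {a b : V} (P : G.Walk a b)

lemma eccW_le {m : ℕ} (h : ∀ u, ∃ x ∈ P.support, G.dist u x ≤ m) : eccW G P ≤ m := by
  refine Finset.sup_le fun u _ => ?_
  obtain ⟨x, hx, hux⟩ := h u
  exact (Finset.inf'_le _ (List.mem_toFinset.mpr hx)).trans hux

lemma le_eccW {m : ℕ} (u : V) (h : ∀ x ∈ P.support, m ≤ G.dist u x) : m ≤ eccW G P :=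
  (Finset.le_inf' _ _ fun x hx => h x (List.mem_toFinset.mp hx)).trans
    (Finset.le_sup (f := walkDist G P) (Finset.mem_univ u))

lemma pe_le_eccW (hP : P.IsPath) : pe G ≤ eccW G P :=
  Nat.sInf_le ⟨a, b, P, hP, rfl⟩

lemma le_pe [Nonempty V] {m : ℕ} (h : ∀ (a b : V) (P : G.Walk a b), P.IsPath → m ≤ eccW G P) :
    m ≤ pe G := by
  obtain ⟨v⟩ := ‹Nonempty V›
  refine le_csInf ⟨_, v, v, Walk.nil, Walk.IsPath.nil, rfl⟩ ?_
  rintro _ ⟨a, b, P, hP, rfl⟩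
  exact h a b P hP

end Eccentricity

section CutVertex

variable {α β : Type*} {G : SimpleGraph α} {c : α} {f : α → β}

lemma SimpleGraph.Walk.apply_eq_of_notMem_support
    (hf : ∀ x y, G.Adj x y → x ≠ c → y ≠ c → f x = f y) {u v : α} (p : G.Walk u v)
    (hc : c ∉ p.support) : ∀ x ∈ p.support, f x = f u := by
  induction p with
  | nil => simp
  | cons h p ih =>
    rw [Walk.support_cons, List.mem_cons, not_or] at hc
    intro x hx
    rw [Walk.support_cons, List.mem_cons] at hx
    rcases hx with rfl | hx
    · rfl
    · rw [ih hc.2 x hx, hf _ _ h (Ne.symm hc.1) fun h => hc.2 (h ▸ p.start_mem_support)]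

lemma SimpleGraph.Walk.IsPath.exists_apply_eq_of_start
    (hf : ∀ x y, G.Adj x y → x ≠ c → y ≠ c → f x = f y) {v : α} {p : G.Walk c v}
    (hp : p.IsPath) : ∃ y, ∀ x ∈ p.support, x = c ∨ f x = y := by
  cases p with
  | nil => exact ⟨f c, by simp⟩
  | @cons _ w _ h q =>
    rw [Walk.cons_isPath_iff] at hp
    refine ⟨f w, fun x hx => ?_⟩
    rw [Walk.support_cons, List.mem_cons] at hx
    exact hx.imp id fun hx => q.apply_eq_of_notMem_support hf hp.2 x hx

/-- Removing the cut vertex `c` separates the level sets of `f`, and a path visits `c` at most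
once, so it meets at most two of them. -/
lemma SimpleGraph.Walk.IsPath.exists_apply_eq_of_cut [DecidableEq α]
    (hf : ∀ x y, G.Adj x y → x ≠ c → y ≠ c → f x = f y) {u v : α} {p : G.Walk u v}
    (hp : p.IsPath) : ∃ y₁ y₂, ∀ x ∈ p.support, x = c ∨ f x = y₁ ∨ f x = y₂ := by
  by_cases hc : c ∈ p.support
  · obtain ⟨y₁, h₁⟩ := (hp.takeUntil hc).reverse.exists_apply_eq_of_start hf
    obtain ⟨y₂, h₂⟩ := (hp.dropUntil hc).exists_apply_eq_of_start hf
    refine ⟨y₁, y₂, fun x hx => ?_⟩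
    rw [← p.take_spec hc, Walk.mem_support_append_iff] at hx
    rcases hx with hx | hx
    · exact (h₁ x (by simpa using hx)).imp_right Or.inl
    · exact (h₂ x hx).imp_right Or.inr
  · exact ⟨f u, f u, fun x hx => Or.inr (Or.inl (p.apply_eq_of_notMem_support hf hc x hx))⟩

end CutVertex

lemma le_add_dist_of_adj {α : Type*} {G : SimpleGraph α} {f : α → ℕ}
    (hf : ∀ x y, G.Adj x y → f x ≤ f y + 1) {u v : α} (huv : G.Reachable u v) :
    f u ≤ f v + G.dist u v := by
  obtain ⟨p, hp⟩ := huv.exists_walk_length_eq_dist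
  rw [← hp]
  clear hp huv
  induction p with
  | nil => simp
  | cons h p ih =>
    have := hf _ _ h
    rw [Walk.length_cons]
    omega

namespace Spider

abbrev graph (t : ℕ) : SimpleGraph (Option (Fin 3 × Fin (t + 1))) :=
  SimpleGraph.fromRel (spiderRel t)

variable {t : ℕ}

lemma exists_walk_center (i : Fin 3) (k : Fin (t + 1)) :
    ∃ p : (graph t).Walk (some (i, k)) none, p.length = k + 1 := by
  induction k using Fin.induction with
  | zero => exact ⟨Walk.cons (by simp [spiderRel]) Walk.nil, rfl⟩
  | succ k ih =>
    obtain ⟨p, hp⟩ := ih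
    exact ⟨Walk.cons (by simp [spiderRel, Fin.ext_iff]) p, by simp [hp]⟩

lemma reachable_center (x : Option (Fin 3 × Fin (t + 1))) : (graph t).Reachable x none := by
  rcases x with _ | ⟨i, k⟩
  · rfl
  · obtain ⟨p, -⟩ := exists_walk_center i k
    exact ⟨p⟩

lemma dist_center_le (x : Option (Fin 3 × Fin (t + 1))) : (graph t).dist x none ≤ t + 1 := by
  rcases x with _ | ⟨i, k⟩
  · simp
  · obtain ⟨p, hp⟩ := exists_walk_center i k
    have := (graph t).dist_le p
    omega

lemma leg_eq_of_adj {x y : Option (Fin 3 × Fin (t + 1))} (h : (graph t).Adj x y)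
    (hx : x ≠ none) (hy : y ≠ none) : x.map Prod.fst = y.map Prod.fst := by
  rcases x with _ | ⟨i, k⟩ <;> rcases y with _ | ⟨j, l⟩
  all_goals simp_all [spiderRel]
  rcases h.2 with h | h <;> simp [h.1]

lemma exists_leg_notMem_support {a b : Option (Fin 3 × Fin (t + 1))} {P : (graph t).Walk a b}
    (hP : P.IsPath) : ∃ i : Fin 3, ∀ x ∈ P.support, x.map Prod.fst ≠ some i := by
  obtain ⟨y₁, y₂, h⟩ := hP.exists_apply_eq_of_cut (fun _ _ => leg_eq_of_adj)
  have three_legs : ∀ y₁ y₂ : Option (Fin 3), ∃ i : Fin 3, some i ≠ y₁ ∧ some i ≠ y₂ := by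
    decide
  obtain ⟨i, h₁, h₂⟩ := three_legs y₁ y₂
  refine ⟨i, fun x hx => ?_⟩
  rcases h x hx with rfl | hx | hx
  · simp
  · exact hx ▸ h₁.symm
  · exact hx ▸ h₂.symm

def legDepth (i : Fin 3) : Option (Fin 3 × Fin (t + 1)) → ℕ
  | none => 0
  | some (j, k) => if j = i then k + 1 else 0

lemma legDepth_le_of_adj (i : Fin 3) {x y : Option (Fin 3 × Fin (t + 1))}
    (h : (graph t).Adj x y) : legDepth i x ≤ legDepth i y + 1 := by
  rcases x with _ | ⟨j, k⟩ <;> rcases y with _ | ⟨l, m⟩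
  all_goals simp only [fromRel_adj, spiderRel, legDepth] at h ⊢
  all_goals grind

lemma succ_le_eccW {a b : Option (Fin 3 × Fin (t + 1))} {P : (graph t).Walk a b}
    (hP : P.IsPath) : t + 1 ≤ eccW (graph t) P := by
  obtain ⟨i, hi⟩ := exists_leg_notMem_support hP
  refine le_eccW P (some (i, Fin.last t)) fun x hx => ?_
  have hx : legDepth i x = 0 := by
    rcases x with _ | ⟨j, k⟩
    · rfl
    · simpa [legDepth] using hi _ hx
  have := le_add_dist_of_adj (fun _ _ => legDepth_le_of_adj i)
    ((reachable_center (some (i, Fin.last t))).trans (reachable_center x).symm)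
  simp_all [legDepth]

theorem pe_eq : pe (graph t) = t + 1 := by
  refine le_antisymm ?_ (le_pe fun _ _ _ => succ_le_eccW)
  calc pe (graph t) ≤ eccW (graph t) (Walk.nil' none) := pe_le_eccW _ Walk.IsPath.nil
    _ ≤ t + 1 := eccW_le _ fun u => ⟨none, by simp, dist_center_le u⟩

end Spider

theorem stmt9 (t : ℕ) :
    Fintype.card (Option (Fin 3 × Fin (t + 1))) = 3 * t + 4 ∧
    pe (SimpleGraph.fromRel (spiderRel t)) = t + 1 ∧
    (pe (SimpleGraph.fromRel (spiderRel t)) : ℝ) =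
      ((Fintype.card (Option (Fin 3 × Fin (t + 1))) : ℝ) - 1) / 3 := by
  have hcard : Fintype.card (Option (Fin 3 × Fin (t + 1))) = 3 * t + 4 := by
    simp only [Fintype.card_option, Fintype.card_prod, Fintype.card_fin]
    ring
  refine ⟨hcard, Spider.pe_eq, ?_⟩
  rw [Spider.pe_eq, hcard]
  push_cast
  ring
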